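/- Let n ≥ 3 and let a, b be positive integers. If the sequence (1, a, a, ..., a, b) of length n+1 (with n−1 middle entries all equal to a) is a pure O-sequence, then b ≤ a ≤ (b+1)(n+1). -/

import Mathlib

/-- The degree of a monomial (exponent vector) in `s` variables. -/
def mdeg {s : ℕ} (u : Fin s → ℕ) : ℕ := ∑ i, u i

/-- A (nonempty, finite) set of monomials is an order ideal if it is closed
under divisibility (componentwise `≤` of exponent vectors). -/
def IsOrderIdeal {s : ℕ} (A : Finset (Fin s → ℕ)) : Prop :=
  A.Nonempty ∧ ∀ u ∈ A, ∀ v : Fin s → ℕ, v ≤ u → v ∈ A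

/-- `u` is a maximal element of `A` with respect to divisibility. -/
def IsMaximalIn {s : ℕ} (A : Finset (Fin s → ℕ)) (u : Fin s → ℕ) : Prop :=
  u ∈ A ∧ ∀ v ∈ A, u ≤ v → v = u

/-- An order ideal is pure if all its maximal monomials have the same degree. -/
def IsPure {s : ℕ} (A : Finset (Fin s → ℕ)) : Prop :=
  ∀ u v : Fin s → ℕ, IsMaximalIn A u → IsMaximalIn A v → mdeg u = mdeg v

/-- The maximal degree of a monomial in `A`. -/
def topDegree {s : ℕ} (A : Finset (Fin s → ℕ)) : ℕ := A.sup mdeg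

/-- The number of monomials of degree `i` in `A`. -/
def hVec {s : ℕ} (A : Finset (Fin s → ℕ)) (i : ℕ) : ℕ :=
  (A.filter (fun u => mdeg u = i)).card

/-- The h-vector `(h_0, h_1, ..., h_n)` of `A`, where `n = topDegree A`. -/
def hVector {s : ℕ} (A : Finset (Fin s → ℕ)) : List ℕ :=
  (List.range (topDegree A + 1)).map (hVec A)

/-- A finite sequence is a pure O-sequence if it is the h-vector of some
pure order ideal of monomials. -/
def IsPureOSequence (h : List ℕ) : Prop :=
  ∃ (s : ℕ) (A : Finset (Fin s → ℕ)), IsOrderIdeal A ∧ IsPure A ∧ hVector A = h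

/-!
Consider the graph on the variables whose edges are the squarefree degree-two monomials `x_i x_j`
of `A`. By purity every variable divides a monomial of degree three, which contains a square or a
triangle; hence a breadth-first spanning tree of a component `K` misses some degree-two monomial
of `K`, and `K` carries at least `#K` of them. Since `h₂ = h₁`, every component carries exactly
`#K`, so exactly one degree-two monomial `f` of `K` is not a tree edge. Tree edges contain no
square and, by the parity of distances from the root, no triangle; so `f` divides every monomial
of degree `≥ 3` in `K`, and dividing by `f` injects degree `k` into degree `k - 2`. Thus
`h_n ≤ ∑ #K = a`. Conversely each variable divides one of the `b` monomials of degree `n`, each of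
which involves at most `n` variables, so `a ≤ n b`.
-/

open Finset

variable {s : ℕ}

theorem mdeg_add (u v : Fin s → ℕ) : mdeg (u + v) = mdeg u + mdeg v :=
  sum_add_distrib

theorem mdeg_single (i : Fin s) (k : ℕ) : mdeg (Pi.single i k) = k := by
  simp [mdeg, sum_pi_single']

theorem mdeg_mono {u v : Fin s → ℕ} (h : u ≤ v) : mdeg u ≤ mdeg v :=
  sum_le_sum fun i _ => h i

theorem mdeg_eq_zero_iff {u : Fin s → ℕ} : mdeg u = 0 ↔ u = 0 := by
  simp [mdeg, sum_eq_zero_iff, funext_iff]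

theorem mdeg_tsub {u v : Fin s → ℕ} (h : u ≤ v) : mdeg (v - u) = mdeg v - mdeg u := by
  have := mdeg_add (v - u) u
  rw [tsub_add_cancel_of_le h] at this
  omega

theorem eq_of_le_of_mdeg_le {u v : Fin s → ℕ} (h : u ≤ v) (hd : mdeg v ≤ mdeg u) : u = v := by
  have : v - u = 0 := mdeg_eq_zero_iff.mp (by rw [mdeg_tsub h]; omega)
  rw [← tsub_add_cancel_of_le h, this, zero_add]

theorem single_le_iff {i : Fin s} {u : Fin s → ℕ} {k : ℕ} : Pi.single i k ≤ u ↔ k ≤ u i := by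
  refine ⟨fun h => by simpa using h i, fun h j => ?_⟩
  rcases eq_or_ne j i with rfl | hj
  · simpa using h
  · simp [hj]

theorem single_one_le_iff {i : Fin s} {u : Fin s → ℕ} : Pi.single i 1 ≤ u ↔ u i ≠ 0 :=
  single_le_iff.trans Nat.one_le_iff_ne_zero

theorem exists_ne_zero_of_mdeg_ne_zero {u : Fin s → ℕ} (h : mdeg u ≠ 0) : ∃ i, u i ≠ 0 :=
  Function.ne_iff.mp (mt mdeg_eq_zero_iff.mpr h)

theorem exists_eq_single_of_mdeg_eq_one {u : Fin s → ℕ} (h : mdeg u = 1) :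
    ∃ i, u = Pi.single i 1 := by
  obtain ⟨i, hi⟩ := exists_ne_zero_of_mdeg_ne_zero (h ▸ one_ne_zero)
  exact ⟨i, (eq_of_le_of_mdeg_le (single_one_le_iff.mpr hi) (by rw [h, mdeg_single])).symm⟩

theorem exists_le_le_mdeg_eq {u m : Fin s → ℕ} (hum : u ≤ m) {k : ℕ} (hk : mdeg u ≤ k)
    (hkm : k ≤ mdeg m) : ∃ v, u ≤ v ∧ v ≤ m ∧ mdeg v = k := by
  induction k, hk using Nat.le_induction with
  | base => exact ⟨u, le_rfl, hum, rfl⟩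
  | succ k hk ih =>
    obtain ⟨v, huv, hvm, rfl⟩ := ih (by omega)
    obtain ⟨i, hi⟩ : ∃ i, v i < m i := by
      by_contra! h
      exact absurd (mdeg_mono h) (by omega)
    refine ⟨v + Pi.single i 1, huv.trans le_self_add, fun j => ?_, by rw [mdeg_add, mdeg_single]⟩
    rcases eq_or_ne j i with rfl | hj
    · simpa using hi
    · simpa [hj] using hvm j

def vars (u : Fin s → ℕ) : Finset (Fin s) := {i | u i ≠ 0}

@[simp] theorem mem_vars {u : Fin s → ℕ} {i : Fin s} : i ∈ vars u ↔ u i ≠ 0 := by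
  simp [vars]

theorem card_vars_le_mdeg (u : Fin s → ℕ) : #(vars u) ≤ mdeg u := by
  rw [vars, card_filter]
  exact sum_le_sum fun i _ => by split_ifs <;> omega

theorem mdeg_le_card_vars {u : Fin s → ℕ} (h : ∀ i, u i ≤ 1) : mdeg u ≤ #(vars u) := by
  rw [vars, card_filter]
  exact sum_le_sum fun i _ => by have := h i; split_ifs <;> omega

/-- The monomial `x_i x_j` (the square `x_i²` when `i = j`). -/
def edge (i j : Fin s) : Fin s → ℕ := Pi.single i 1 + Pi.single j 1

theorem mdeg_edge (i j : Fin s) : mdeg (edge i j) = 2 := by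
  simp [edge, mdeg_add, mdeg_single]

theorem edge_comm (i j : Fin s) : edge i j = edge j i := add_comm _ _

theorem edge_inj {i j k l : Fin s} : edge i j = edge k l ↔ (i = k ∧ j = l) ∨ (i = l ∧ j = k) := by
  rw [edge, edge, Pi.single_add_single_eq_single_add_single one_ne_zero one_ne_zero]
  simp

theorem edge_le_of_ne {u : Fin s → ℕ} {i j : Fin s} (hij : i ≠ j) (hi : u i ≠ 0) (hj : u j ≠ 0) :
    edge i j ≤ u := by
  intro x
  simp only [edge, Pi.add_apply, Pi.single_apply]
  split_ifs <;> subst_vars <;> omega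

theorem edge_self_le {u : Fin s → ℕ} {i : Fin s} (h : 2 ≤ u i) : edge i i ≤ u := by
  intro x
  simp only [edge, Pi.add_apply, Pi.single_apply]
  split_ifs <;> subst_vars <;> omega

theorem edge_le_or_triangle_le {u : Fin s → ℕ} (h : 3 ≤ mdeg u) :
    (∃ i, edge i i ≤ u) ∨ ∃ i j k, i ≠ j ∧ i ≠ k ∧ j ≠ k ∧
      edge i j ≤ u ∧ edge i k ≤ u ∧ edge j k ≤ u := by
  by_cases hsq : ∃ i, 2 ≤ u i
  · obtain ⟨i, hi⟩ := hsq
    exact .inl ⟨i, edge_self_le hi⟩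
  · simp only [not_exists, not_le] at hsq
    obtain ⟨i, j, k, hi, hj, hk, hij, hik, hjk⟩ :=
      two_lt_card_iff.mp ((mdeg_le_card_vars fun i => by have := hsq i; omega).trans_lt' h)
    rw [mem_vars] at hi hj hk
    exact .inr ⟨i, j, k, hij, hik, hjk, edge_le_of_ne hij hi hj, edge_le_of_ne hik hi hk,
      edge_le_of_ne hjk hj hk⟩

section OrderIdeal

variable {A : Finset (Fin s → ℕ)}

theorem exists_isMaximalIn_le {u : Fin s → ℕ} (hu : u ∈ A) : ∃ m, IsMaximalIn A m ∧ u ≤ m := by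
  obtain ⟨m, hum, hm⟩ := A.exists_le_maximal hu
  exact ⟨m, ⟨hm.prop, fun v hv hmv => le_antisymm (hm.2 hv hmv) hmv⟩, hum⟩

theorem IsOrderIdeal.exists_le_mdeg_eq (hA : IsOrderIdeal A) (hP : IsPure A) {u : Fin s → ℕ}
    (hu : u ∈ A) {k : ℕ} (hk : mdeg u ≤ k) (hkA : k ≤ topDegree A) :
    ∃ v ∈ A, u ≤ v ∧ mdeg v = k := by
  obtain ⟨w, hw, hwA⟩ := A.exists_mem_eq_sup hA.1 mdeg
  obtain ⟨mw, hmw, hwmw⟩ := exists_isMaximalIn_le hw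
  obtain ⟨m, hm, hum⟩ := exists_isMaximalIn_le hu
  have hmA : mdeg m = topDegree A := by
    rw [hP m mw hm hmw]
    exact le_antisymm (le_sup hmw.1) (by rw [topDegree, hwA]; exact mdeg_mono hwmw)
  obtain ⟨v, huv, hvm, rfl⟩ := exists_le_le_mdeg_eq hum hk (hmA ▸ hkA)
  exact ⟨v, hA.2 m hm.1 v hvm, huv, rfl⟩

theorem topDegree_add_one_of_hVector_eq {l : List ℕ} (h : hVector A = l) :
    topDegree A + 1 = l.length := by
  simp [← h, hVector]

theorem hVec_eq_getElem_of_hVector_eq {l : List ℕ} (h : hVector A = l) {i : ℕ}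
    (hi : i < l.length) : hVec A i = l[i] := by
  simp [← h, hVector]

end OrderIdeal

namespace SimpleGraph

variable {V : Type*} {G : SimpleGraph V}

theorem Reachable.exists_adj_dist_add_one_eq {x₀ y : V} (h : G.Reachable x₀ y) (hne : y ≠ x₀) :
    ∃ w, G.Adj w y ∧ G.dist x₀ w + 1 = G.dist x₀ y := by
  obtain ⟨p, hp⟩ := h.symm.exists_walk_length_eq_dist
  cases p with
  | nil => exact absurd rfl hne
  | cons hadj q =>
    obtain ⟨q', hq'⟩ := q.reachable.exists_walk_length_eq_dist
    have hle := dist_le (Walk.cons hadj q')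
    have hge := dist_le q
    rw [Walk.length_cons] at hp hle
    refine ⟨_, hadj.symm, ?_⟩
    rw [dist_comm, dist_comm (u := x₀)]
    omega

/-- The edges `{P y, y}` form a breadth-first spanning tree of the component of `x₀`. -/
def IsBFSParent (G : SimpleGraph V) (x₀ : V) (P : V → V) : Prop :=
  ∀ y, G.Reachable x₀ y → y ≠ x₀ → G.Adj (P y) y ∧ G.dist x₀ (P y) + 1 = G.dist x₀ y

theorem exists_isBFSParent (G : SimpleGraph V) (x₀ : V) : ∃ P, G.IsBFSParent x₀ P := by
  have : Nonempty V := ⟨x₀⟩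
  choose! P hP using fun y (h : G.Reachable x₀ y) (hne : y ≠ x₀) =>
    h.exists_adj_dist_add_one_eq hne
  exact ⟨P, hP⟩

end SimpleGraph

def varGraph (A : Finset (Fin s → ℕ)) : SimpleGraph (Fin s) where
  Adj i j := i ≠ j ∧ edge i j ∈ A
  symm := ⟨fun _ _ h => ⟨h.1.symm, edge_comm _ _ ▸ h.2⟩⟩
  loopless := ⟨fun _ h => h.1 rfl⟩

@[simp] theorem varGraph_adj {A : Finset (Fin s → ℕ)} {i j : Fin s} :
    (varGraph A).Adj i j ↔ i ≠ j ∧ edge i j ∈ A :=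
  Iff.rfl

open scoped Classical in
/-- For `u` in an order ideal the variables of `u` are pairwise adjacent, so this is the connected
component containing them (and `∅` for `u = 0`). -/
noncomputable def component (A : Finset (Fin s → ℕ)) (u : Fin s → ℕ) : Finset (Fin s) :=
  {y | ∃ x, u x ≠ 0 ∧ (varGraph A).Reachable x y}

noncomputable def layer (A : Finset (Fin s → ℕ)) (k : ℕ) (K : Finset (Fin s)) :
    Finset (Fin s → ℕ) :=
  {u ∈ A | mdeg u = k ∧ component A u = K}

open scoped Classical in
noncomputable def components (A : Finset (Fin s → ℕ)) : Finset (Finset (Fin s)) :=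
  ({x | Pi.single x 1 ∈ A} : Finset (Fin s)).image fun x => component A (Pi.single x 1)

section Components

variable {A : Finset (Fin s → ℕ)}

theorem mem_component_single {x y : Fin s} :
    y ∈ component A (Pi.single x 1) ↔ (varGraph A).Reachable x y := by
  simp [component, Pi.single_apply]

theorem component_single_eq_of_reachable {x y : Fin s} (h : (varGraph A).Reachable x y) :
    component A (Pi.single x 1) = component A (Pi.single y 1) := by
  ext z
  simp only [mem_component_single]
  exact ⟨h.symm.trans, h.trans⟩

theorem IsOrderIdeal.reachable_of_mem (hA : IsOrderIdeal A) {u : Fin s → ℕ} (hu : u ∈ A)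
    {i j : Fin s} (hi : u i ≠ 0) (hj : u j ≠ 0) : (varGraph A).Reachable i j := by
  rcases eq_or_ne i j with rfl | hij
  · rfl
  · exact SimpleGraph.Adj.reachable (varGraph_adj.mpr ⟨hij, hA.2 u hu _ (edge_le_of_ne hij hi hj)⟩)

theorem IsOrderIdeal.component_eq (hA : IsOrderIdeal A) {u : Fin s → ℕ} (hu : u ∈ A) {x : Fin s}
    (hx : u x ≠ 0) : component A u = component A (Pi.single x 1) := by
  ext y
  rw [mem_component_single]
  simp only [component, mem_filter, mem_univ, true_and]
  exact ⟨fun ⟨x', hx', h⟩ => (hA.reachable_of_mem hu hx hx').trans h, fun h => ⟨x, hx, h⟩⟩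

theorem IsOrderIdeal.mem_layer_of_le (hA : IsOrderIdeal A) {u z : Fin s → ℕ} (hz : z ∈ A)
    (huz : u ≤ z) {k : ℕ} (hk : k ≠ 0) (hu : mdeg u = k) : u ∈ layer A k (component A z) := by
  obtain ⟨x, hx⟩ := exists_ne_zero_of_mdeg_ne_zero (hu ▸ hk)
  have huA := hA.2 z hz u huz
  have hzx : z x ≠ 0 := fun h => hx (Nat.le_zero.mp (h ▸ huz x))
  exact mem_filter.mpr ⟨huA, hu, by rw [hA.component_eq hz hzx, hA.component_eq huA hx]⟩

theorem card_layer_one_le (K : Finset (Fin s)) : #(layer A 1 K) ≤ #K := by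
  refine (card_le_card fun u hu => ?_).trans (card_image_le (f := fun y => Pi.single y 1))
  obtain ⟨-, hu1, rfl⟩ := mem_filter.mp hu
  obtain ⟨y, rfl⟩ := exists_eq_single_of_mdeg_eq_one hu1
  exact mem_image.mpr ⟨y, mem_component_single.mpr .rfl, rfl⟩

theorem IsOrderIdeal.card_layer_le_card_layer_tsub (hA : IsOrderIdeal A) {k : ℕ}
    {K : Finset (Fin s)} {g : Fin s → ℕ} (hg : ∀ z ∈ layer A k K, g ≤ z) (hgk : mdeg g < k) :
    #(layer A k K) ≤ #(layer A (k - mdeg g) K) := by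
  refine card_le_card_of_injOn (· - g) (fun z hz => ?_) (fun z hz z' hz' h => ?_)
  · obtain ⟨hzA, rfl, rfl⟩ := mem_filter.mp hz
    exact hA.mem_layer_of_le hzA tsub_le_self (by omega) (mdeg_tsub (hg z hz))
  · simpa [tsub_add_cancel_of_le (hg z hz), tsub_add_cancel_of_le (hg z' hz')] using
      congrArg (· + g) h

theorem IsOrderIdeal.hVec_eq_sum_card_layer (hA : IsOrderIdeal A) {k : ℕ} (hk : k ≠ 0) :
    hVec A k = ∑ K ∈ components A, #(layer A k K) := by
  rw [hVec, card_eq_sum_card_fiberwise (f := component A) (t := components A) fun u hu => ?_]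
  · simp only [layer, filter_filter]
  · obtain ⟨huA, hu⟩ := mem_filter.mp (mem_coe.mp hu)
    obtain ⟨x, hx⟩ := exists_ne_zero_of_mdeg_ne_zero (hu ▸ hk)
    rw [hA.component_eq huA hx]
    exact mem_image_of_mem _ (mem_filter.mpr ⟨mem_univ x, hA.2 u huA _ (single_one_le_iff.mpr hx)⟩)

end Components

section SpanningTree

variable {A : Finset (Fin s → ℕ)} {x₀ : Fin s} {P : Fin s → Fin s}

noncomputable def treeEdges (A : Finset (Fin s → ℕ)) (x₀ : Fin s) (P : Fin s → Fin s) :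
    Finset (Fin s → ℕ) :=
  ((component A (Pi.single x₀ 1)).erase x₀).image fun y => edge (P y) y

theorem exists_of_mem_treeEdges {u : Fin s → ℕ} (hu : u ∈ treeEdges A x₀ P) :
    ∃ y, (varGraph A).Reachable x₀ y ∧ y ≠ x₀ ∧ u = edge (P y) y := by
  obtain ⟨y, hy, rfl⟩ := mem_image.mp hu
  obtain ⟨hne, hy⟩ := mem_erase.mp hy
  exact ⟨y, mem_component_single.mp hy, hne, rfl⟩

theorem card_treeEdges_add_one (hP : (varGraph A).IsBFSParent x₀ P) :
    #(treeEdges A x₀ P) + 1 = #(component A (Pi.single x₀ 1)) := by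
  have hx₀ : x₀ ∈ component A (Pi.single x₀ 1) := mem_component_single.mpr .rfl
  rw [treeEdges, card_image_of_injOn, card_erase_add_one hx₀]
  intro y hy y' hy' h
  obtain ⟨hne, hy⟩ := mem_erase.mp hy
  obtain ⟨hne', hy'⟩ := mem_erase.mp hy'
  have hd := (hP y (mem_component_single.mp hy) hne).2
  have hd' := (hP y' (mem_component_single.mp hy') hne').2
  rcases edge_inj.mp h with ⟨-, h⟩ | ⟨h₁, h₂⟩
  · exact h
  · rw [h₁] at hd
    rw [← h₂] at hd'
    omega

theorem edge_self_notMem_treeEdges (hP : (varGraph A).IsBFSParent x₀ P) (i : Fin s) :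
    edge i i ∉ treeEdges A x₀ P := by
  intro h
  obtain ⟨y, hy, hne, h⟩ := exists_of_mem_treeEdges h
  have hadj := (hP y hy hne).1
  rcases edge_inj.mp h with ⟨h₁, h₂⟩ | ⟨h₁, h₂⟩
  · exact hadj.ne (h₁.symm.trans h₂)
  · exact hadj.ne (h₂.symm.trans h₁)

theorem dist_of_edge_mem_treeEdges (hP : (varGraph A).IsBFSParent x₀ P) {i j : Fin s}
    (h : edge i j ∈ treeEdges A x₀ P) :
    (varGraph A).dist x₀ i + 1 = (varGraph A).dist x₀ j ∨
      (varGraph A).dist x₀ j + 1 = (varGraph A).dist x₀ i := by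
  obtain ⟨y, hy, hne, h⟩ := exists_of_mem_treeEdges h
  have hd := (hP y hy hne).2
  rcases edge_inj.mp h with ⟨rfl, rfl⟩ | ⟨rfl, rfl⟩
  · exact .inl hd
  · exact .inr hd

theorem IsOrderIdeal.treeEdges_subset (hA : IsOrderIdeal A)
    (hP : (varGraph A).IsBFSParent x₀ P) :
    treeEdges A x₀ P ⊆ layer A 2 (component A (Pi.single x₀ 1)) := by
  intro u hu
  obtain ⟨y, hy, hne, rfl⟩ := exists_of_mem_treeEdges hu
  obtain ⟨hPy, hmem⟩ := varGraph_adj.mp (hP y hy hne).1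
  have hyy : edge (P y) y y ≠ 0 := by simp [edge]
  refine mem_filter.mpr ⟨hmem, mdeg_edge _ _, ?_⟩
  rw [hA.component_eq hmem hyy, component_single_eq_of_reachable hy]

/-- A square is never a tree edge, and the three edges of a triangle cannot all be tree edges,
since the three distances from `x₀` would then have pairwise odd sums. -/
theorem IsOrderIdeal.exists_le_notMem_treeEdges (hA : IsOrderIdeal A)
    (hP : (varGraph A).IsBFSParent x₀ P) {z : Fin s → ℕ} (hz : z ∈ A) (h3 : 3 ≤ mdeg z)
    (hzK : component A z = component A (Pi.single x₀ 1)) :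
    ∃ u ∈ layer A 2 (component A (Pi.single x₀ 1)), u ≤ z ∧ u ∉ treeEdges A x₀ P := by
  have hmem {u} (huz : u ≤ z) (hu : mdeg u = 2) : u ∈ layer A 2 (component A (Pi.single x₀ 1)) :=
    hzK ▸ hA.mem_layer_of_le hz huz two_ne_zero hu
  rcases edge_le_or_triangle_le h3 with ⟨i, hi⟩ | ⟨i, j, k, -, -, -, hij, hik, hjk⟩
  · exact ⟨_, hmem hi (mdeg_edge i i), hi, edge_self_notMem_treeEdges hP i⟩
  · by_contra! h
    have := dist_of_edge_mem_treeEdges hP (h _ (hmem hij (mdeg_edge i j)) hij)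
    have := dist_of_edge_mem_treeEdges hP (h _ (hmem hik (mdeg_edge i k)) hik)
    have := dist_of_edge_mem_treeEdges hP (h _ (hmem hjk (mdeg_edge j k)) hjk)
    omega

end SpanningTree

section Counting

variable {A : Finset (Fin s → ℕ)}

theorem IsOrderIdeal.card_component_le_card_layer_two (hA : IsOrderIdeal A) {z : Fin s → ℕ}
    (hz : z ∈ A) (h3 : 3 ≤ mdeg z) : #(component A z) ≤ #(layer A 2 (component A z)) := by
  obtain ⟨x₀, hx₀⟩ := exists_ne_zero_of_mdeg_ne_zero (by omega : mdeg z ≠ 0)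
  obtain ⟨P, hP⟩ := (varGraph A).exists_isBFSParent x₀
  obtain ⟨u, hu, -, huT⟩ := hA.exists_le_notMem_treeEdges hP hz h3 (hA.component_eq hz hx₀)
  rw [hA.component_eq hz hx₀, ← card_treeEdges_add_one hP]
  exact card_lt_card ((ssubset_iff_of_subset (hA.treeEdges_subset hP)).mpr ⟨u, hu, huT⟩)

/-- The tree edges fill all but at most one element of `layer A 2`, so the non-tree divisor given
by `exists_le_notMem_treeEdges` is the same for every `z`. -/
theorem IsOrderIdeal.exists_mdeg_eq_two_le_of_mem_layer (hA : IsOrderIdeal A) {x₀ : Fin s}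
    {P : Fin s → Fin s} (hP : (varGraph A).IsBFSParent x₀ P)
    (h2 : #(layer A 2 (component A (Pi.single x₀ 1))) ≤ #(component A (Pi.single x₀ 1)))
    {k : ℕ} (hk : 3 ≤ k) :
    ∃ f, mdeg f = 2 ∧ ∀ z ∈ layer A k (component A (Pi.single x₀ 1)), f ≤ z := by
  set K := component A (Pi.single x₀ 1)
  have hle : #(layer A 2 K \ treeEdges A x₀ P) ≤ 1 := by
    have : #(treeEdges A x₀ P) + 1 = #K := card_treeEdges_add_one hP
    have hsub : treeEdges A x₀ P ⊆ layer A 2 K := hA.treeEdges_subset hP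
    rw [card_sdiff_of_subset hsub]
    omega
  have hdiv (z) (hz : z ∈ layer A k K) : ∃ u ∈ layer A 2 K \ treeEdges A x₀ P, u ≤ z := by
    obtain ⟨hzA, rfl, hzK⟩ := mem_filter.mp hz
    obtain ⟨u, hu, huz, huT⟩ := hA.exists_le_notMem_treeEdges hP hzA hk hzK
    exact ⟨u, mem_sdiff.mpr ⟨hu, huT⟩, huz⟩
  rcases (layer A k K).eq_empty_or_nonempty with h | ⟨z₀, hz₀⟩
  · exact ⟨edge x₀ x₀, mdeg_edge _ _, by simp [h]⟩
  · obtain ⟨f, hf, -⟩ := hdiv z₀ hz₀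
    refine ⟨f, (mem_filter.mp (mem_sdiff.mp hf).1).2.1, fun z hz => ?_⟩
    obtain ⟨u, hu, huz⟩ := hdiv z hz
    rwa [card_le_one.mp hle f hf u hu]

theorem IsOrderIdeal.card_layer_le_card_component (hA : IsOrderIdeal A) (x₀ : Fin s)
    (h2 : #(layer A 2 (component A (Pi.single x₀ 1))) ≤ #(component A (Pi.single x₀ 1)))
    {k : ℕ} (hk : 1 ≤ k) :
    #(layer A k (component A (Pi.single x₀ 1))) ≤ #(component A (Pi.single x₀ 1)) := by
  obtain ⟨P, hP⟩ := (varGraph A).exists_isBFSParent x₀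
  induction k using Nat.strong_induction_on with
  | _ k ih =>
    rcases (by omega : k = 1 ∨ k = 2 ∨ 3 ≤ k) with rfl | rfl | hk3
    · exact card_layer_one_le _
    · exact h2
    · obtain ⟨f, hf, hfz⟩ := hA.exists_mdeg_eq_two_le_of_mem_layer hP h2 hk3
      calc _ ≤ #(layer A (k - 2) (component A (Pi.single x₀ 1))) :=
            hf ▸ hA.card_layer_le_card_layer_tsub hfz (by omega)
        _ ≤ _ := ih (k - 2) (by omega) (by omega)

theorem IsOrderIdeal.hVec_le_hVec_two (hA : IsOrderIdeal A)
    (hext : ∀ x, Pi.single x 1 ∈ A → ∃ z ∈ A, Pi.single x 1 ≤ z ∧ 3 ≤ mdeg z)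
    (h21 : hVec A 2 ≤ hVec A 1) {k : ℕ} (hk : 1 ≤ k) : hVec A k ≤ hVec A 2 := by
  have hroot {K} (hK : K ∈ components A) :
      ∃ x, Pi.single x 1 ∈ A ∧ K = component A (Pi.single x 1) := by
    obtain ⟨x, hx, rfl⟩ := mem_image.mp hK
    exact ⟨x, (mem_filter.mp hx).2, rfl⟩
  have hK2 : ∀ K ∈ components A, #K ≤ #(layer A 2 K) := by
    intro K hK
    obtain ⟨x, hx, rfl⟩ := hroot hK
    obtain ⟨z, hz, hxz, h3⟩ := hext x hx
    rw [← hA.component_eq hz (single_one_le_iff.mp hxz)]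
    exact hA.card_component_le_card_layer_two hz h3
  have hsum : ∑ K ∈ components A, #(layer A 2 K) ≤ ∑ K ∈ components A, #K :=
    calc _ = hVec A 2 := (hA.hVec_eq_sum_card_layer two_ne_zero).symm
      _ ≤ hVec A 1 := h21
      _ = ∑ K ∈ components A, #(layer A 1 K) := hA.hVec_eq_sum_card_layer one_ne_zero
      _ ≤ _ := sum_le_sum fun K _ => card_layer_one_le K
  have heq := (sum_eq_sum_iff_of_le hK2).mp (le_antisymm (sum_le_sum hK2) hsum)
  calc hVec A k = ∑ K ∈ components A, #(layer A k K) := hA.hVec_eq_sum_card_layer (by omega)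
    _ ≤ ∑ K ∈ components A, #K := sum_le_sum fun K hK => by
      obtain ⟨x, -, rfl⟩ := hroot hK
      exact hA.card_layer_le_card_component x (heq _ hK).ge hk
    _ ≤ ∑ K ∈ components A, #(layer A 2 K) := sum_le_sum hK2
    _ = hVec A 2 := (hA.hVec_eq_sum_card_layer two_ne_zero).symm

end Counting

theorem hVec_one_le_mul {A : Finset (Fin s → ℕ)} {n : ℕ}
    (hext : ∀ x, Pi.single x 1 ∈ A → ∃ z ∈ A, Pi.single x 1 ≤ z ∧ mdeg z = n) :
    hVec A 1 ≤ n * hVec A n := by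
  set top := A.filter (mdeg · = n)
  have hsub : A.filter (mdeg · = 1) ⊆ top.biUnion fun z => (vars z).image (Pi.single · 1) := by
    intro u hu
    obtain ⟨huA, hu1⟩ := mem_filter.mp hu
    obtain ⟨x, rfl⟩ := exists_eq_single_of_mdeg_eq_one hu1
    obtain ⟨z, hz, hxz, hzn⟩ := hext x huA
    exact mem_biUnion.mpr ⟨z, mem_filter.mpr ⟨hz, hzn⟩, mem_image_of_mem _
      (mem_vars.mpr (single_one_le_iff.mp hxz))⟩
  calc hVec A 1 ≤ ∑ z ∈ top, #((vars z).image (Pi.single · 1)) :=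
        (card_le_card hsub).trans card_biUnion_le
    _ ≤ ∑ z ∈ top, n := sum_le_sum fun z hz =>
        card_image_le.trans ((card_vars_le_mdeg z).trans (mem_filter.mp hz).2.le)
    _ = n * hVec A n := by rw [sum_const, smul_eq_mul, mul_comm]; rfl

theorem stmt_11_general (n a b : ℕ) (hn : 3 ≤ n)
    (h : IsPureOSequence (1 :: (List.replicate (n - 1) a ++ [b]))) :
    b ≤ a ∧ a ≤ (b + 1) * (n + 1) := by
  obtain ⟨s, A, hA, hpure, hA_h⟩ := h
  have htop : topDegree A = n := by
    have := topDegree_add_one_of_hVector_eq hA_h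
    simp only [List.length_cons, List.length_append, List.length_replicate, List.length_nil] at this
    omega
  have hvec (i : ℕ) (hi : i ≤ n) := hVec_eq_getElem_of_hVector_eq hA_h (i := i) (by simp; omega)
  obtain ⟨h1, h2, hb⟩ : hVec A 1 = a ∧ hVec A 2 = a ∧ hVec A n = b := by
    rw [hvec 1 (by omega), hvec 2 (by omega), hvec n le_rfl]
    obtain ⟨m, rfl⟩ : ∃ m, n = m + 1 := ⟨n - 1, by omega⟩
    simp [List.getElem_append]
    omega
  have hext (x : Fin s) (hx : Pi.single x 1 ∈ A) {k : ℕ} (hk : 1 ≤ k) (hkn : k ≤ n) :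
      ∃ z ∈ A, Pi.single x 1 ≤ z ∧ mdeg z = k :=
    hA.exists_le_mdeg_eq hpure hx (by rwa [mdeg_single]) (htop ▸ hkn)
  constructor
  · rw [← h2, ← hb]
    refine hA.hVec_le_hVec_two (fun x hx => ?_) (h1 ▸ h2).le (by omega)
    obtain ⟨z, hz, hxz, hz3⟩ := hext x hx (by omega) hn
    exact ⟨z, hz, hxz, hz3.ge⟩
  · have := hVec_one_le_mul fun x hx => hext x hx (by omega) le_rfl
    rw [h1, hb] at this
    nlinarith

/-- For `n ≥ 3`, if `(1, a, a, ..., a, b)` of length `n+1` is a pure O-sequence,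
then `b ≤ a ≤ (b+1)(n+1)`. -/
theorem stmt_11 (n a b : ℕ) (hn : 3 ≤ n) (ha : 0 < a) (hb : 0 < b)
    (h : IsPureOSequence (1 :: (List.replicate (n - 1) a ++ [b]))) :
    b ≤ a ∧ a ≤ (b + 1) * (n + 1) :=
  stmt_11_general n a b hn h
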